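/- Let B : ℝ → ℝ be a standard two-sided Brownian motion and fix a continuous function g : ℝ → ℝ, reals a < x₀ < b and δ > 0 with (x₀−δ, x₀+δ) ⊆ (a,b). Then with positive probability, sup_{|x−x₀|<δ} (B(x) + g(x)) > sup_{x ∈ [a,b] \ (x₀−δ, x₀+δ)} (B(x) + g(x)). -/

import Mathlib

open MeasureTheory ProbabilityTheory Set

/-- `B` is a standard two-sided Brownian motion: `B(0) = 0`, continuous sample paths,
independent increments over disjoint intervals, and Gaussian increments
`B(y) − B(x) ~ N(0, y − x)` for `x < y`. -/
def IsTwoSidedBM {Ω : Type*} [MeasurableSpace Ω] (μ : Measure Ω) (B : Ω → ℝ → ℝ) : Prop :=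
  (∀ ω, B ω 0 = 0) ∧
  (∀ ω, Continuous (B ω)) ∧
  (∀ x : ℝ, Measurable fun ω => B ω x) ∧
  (∀ n : ℕ, ∀ r : Fin (n + 1) → ℝ, StrictMono r →
    iIndepFun (m := fun _ : Fin n => Real.measurableSpace)
      (fun i : Fin n => fun ω => B ω (r i.succ) - B ω (r i.castSucc)) μ) ∧
  (∀ x y : ℝ, x < y →
    Measure.map (fun ω => B ω y - B ω x) μ = gaussianReal 0 (Real.toNNReal (y - x)))

open MeasureTheory ProbabilityTheory Set
open scoped ENNReal NNReal

namespace BMaux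

lemma telescope_sum {n : ℕ} (r : Fin (n + 1) → ℝ) (hr : StrictMono r) (F : ℝ → ℝ)
    (k m : Fin (n + 1)) (hkm : k ≤ m) :
    ∑ j ∈ Finset.univ.filter
        (fun j : Fin n => r k ≤ r j.castSucc ∧ r j.succ ≤ r m),
      (F (r j.succ) - F (r j.castSucc)) = F (r m) - F (r k) := by
  have hcond : ∀ j : Fin n,
      (r k ≤ r j.castSucc ∧ r j.succ ≤ r m) ↔ ((k : ℕ) ≤ (j : ℕ) ∧ (j : ℕ) + 1 ≤ (m : ℕ)) := by
    intro j
    rw [hr.le_iff_le, hr.le_iff_le]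
    simp [Fin.le_def]
  have main : ∀ M : ℕ, (k : ℕ) ≤ M → ∀ hM : M < n + 1,
      ∑ j ∈ Finset.univ.filter
          (fun j : Fin n => (k : ℕ) ≤ (j : ℕ) ∧ (j : ℕ) + 1 ≤ M),
        (F (r j.succ) - F (r j.castSucc)) = F (r ⟨M, hM⟩) - F (r k) := by
    intro M hkM
    induction M, hkM using Nat.le_induction with
    | base =>
      intro hM
      have h1 : Finset.univ.filter
          (fun j : Fin n => (k : ℕ) ≤ (j : ℕ) ∧ (j : ℕ) + 1 ≤ (k : ℕ)) = ∅ := by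
        apply Finset.filter_false_of_mem
        intro j _
        omega
      rw [h1]
      have h2 : (⟨(k : ℕ), hM⟩ : Fin (n + 1)) = k := by ext; rfl
      rw [h2]
      simp
    | succ M hkM ih =>
      intro hM
      have hMn : M < n := by omega
      have hfil : Finset.univ.filter
          (fun j : Fin n => (k : ℕ) ≤ (j : ℕ) ∧ (j : ℕ) + 1 ≤ M + 1)
          = insert (⟨M, hMn⟩ : Fin n) (Finset.univ.filter
            (fun j : Fin n => (k : ℕ) ≤ (j : ℕ) ∧ (j : ℕ) + 1 ≤ M)) := by
        ext j
        simp only [Finset.mem_filter, Finset.mem_insert, Finset.mem_univ, true_and,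
          Fin.ext_iff, Fin.val_mk]
        omega
      rw [hfil, Finset.sum_insert (by
        simp only [Finset.mem_filter, Finset.mem_univ, true_and, Fin.val_mk]
        omega)]
      rw [ih (by omega)]
      have e1 : (⟨M, hMn⟩ : Fin n).succ = (⟨M + 1, hM⟩ : Fin (n + 1)) := by ext; rfl
      have e2 : (⟨M, hMn⟩ : Fin n).castSucc = (⟨M, by omega⟩ : Fin (n + 1)) := by ext; rfl
      rw [e1, e2]
      ring
  have hmain := main (m : ℕ) (by exact_mod_cast hkm) m.isLt
  simp only [Fin.eta] at hmain
  have hset : Finset.univ.filter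
      (fun j : Fin n => r k ≤ r j.castSucc ∧ r j.succ ≤ r m)
      = Finset.univ.filter
      (fun j : Fin n => (k : ℕ) ≤ (j : ℕ) ∧ (j : ℕ) + 1 ≤ (m : ℕ)) := by
    apply Finset.filter_congr
    intro j _
    simpa using hcond j
  rw [hset]
  exact hmain

lemma gaussianReal_pos {v : ℝ≥0} (hv : v ≠ 0) (m : ℝ) {s : Set ℝ}
    (hvol : volume s ≠ 0) : 0 < gaussianReal m v s := by
  rw [pos_iff_ne_zero]
  intro h0
  apply hvol
  have h0' : gaussianReal m v (toMeasurable (gaussianReal m v) s) = 0 := by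
    rw [measure_toMeasurable]; exact h0
  rw [gaussianReal_apply m hv _] at h0'
  have hmeas := measurable_gaussianPDF m v
  have hae := (lintegral_eq_zero_iff hmeas).mp h0'
  rw [Filter.EventuallyEq, ae_iff] at hae
  have hne : ∀ x : ℝ, gaussianPDF m v x ≠ 0 := fun x =>
    (ENNReal.ofReal_pos.2 (gaussianPDFReal_pos m v x hv)).ne'
  have huniv : {x : ℝ | ¬ gaussianPDF m v x = (0 : ℝ → ℝ≥0∞) x} = Set.univ := by
    ext x; simp [hne x]
  rw [huniv] at hae
  have hzero : volume (toMeasurable (gaussianReal m v) s) = 0 := by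
    simpa [Measure.restrict_apply_univ] using hae
  exact measure_mono_null (subset_toMeasurable _ _) hzero


lemma key_indep {Ω : Type*} [MeasurableSpace Ω] {μ : Measure Ω} [IsProbabilityMeasure μ]
    {B : Ω → ℝ → ℝ}
    (hmeas : ∀ x : ℝ, Measurable fun ω => B ω x)
    (hindep : ∀ n : ℕ, ∀ r : Fin (n + 1) → ℝ, StrictMono r →
      iIndepFun (m := fun _ : Fin n => Real.measurableSpace)
        (fun i : Fin n => fun ω => B ω (r i.succ) - B ω (r i.castSucc)) μ)
    (w₁ x₀ w₂ : ℝ) (h1 : w₁ < x₀) (h2 : x₀ < w₂)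
    (u v : ℕ → ℝ) (hu : ∀ k, u k ≤ w₁) (hv : ∀ k, w₂ ≤ v k) :
    IndepFun (fun ω => (B ω x₀ - B ω w₁, B ω w₂ - B ω x₀))
      (fun ω => Sum.elim (fun k => B ω (u k) - B ω w₁) (fun k => B ω (v k) - B ω w₂)) μ := by
  classical
  set Z : Ω → ℝ × ℝ := fun ω => (B ω x₀ - B ω w₁, B ω w₂ - B ω x₀) with hZdef
  set W : Ω → (ℕ ⊕ ℕ → ℝ) := fun ω =>
    Sum.elim (fun k => B ω (u k) - B ω w₁) (fun k => B ω (v k) - B ω w₂) with hWdef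
  have hZmeas : Measurable Z := ((hmeas x₀).sub (hmeas w₁)).prodMk ((hmeas w₂).sub (hmeas x₀))
  have hWmeas : Measurable W := measurable_pi_lambda _ (fun i => by
    cases i with
    | inl k => exact (hmeas (u k)).sub (hmeas w₁)
    | inr k => exact (hmeas (v k)).sub (hmeas w₂))
  rw [IndepFun_iff_Indep]
  refine IndepSets.indep (Measurable.comap_le hZmeas) (Measurable.comap_le hWmeas)
    (isPiSystem_prod.comap Z) (isPiSystem_measurableCylinders.comap W) ?_ ?_ ?_
  · rw [← generateFrom_prod, MeasurableSpace.comap_generateFrom]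
    rfl
  · rw [← generateFrom_measurableCylinders, MeasurableSpace.comap_generateFrom]
    rfl
  · rintro t1 t2 ⟨R, hR, rfl⟩ ⟨c, hc, rfl⟩
    obtain ⟨SA, hSA, TA, hTA, rfl⟩ := hR
    obtain ⟨s, S', hS', rfl⟩ := (mem_measurableCylinders c).mp hc
    -- build the finite grid
    let pt : ℕ ⊕ ℕ → ℝ := Sum.elim u v
    let E : Finset ℝ := insert w₁ (insert x₀ (insert w₂ (s.image pt)))
    have hE1 : w₁ ∈ E := by simp [E]
    have hE2 : x₀ ∈ E := by simp [E]
    have hE3 : w₂ ∈ E := by simp [E]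
    have hEpt : ∀ i ∈ s, pt i ∈ E := by
      intro i hi
      simp only [E, Finset.mem_insert]
      exact Or.inr (Or.inr (Or.inr (Finset.mem_image_of_mem pt hi)))
    have hEpos : 0 < E.card := Finset.card_pos.2 ⟨w₁, hE1⟩
    set n : ℕ := E.card - 1 with hn
    have hcard : E.card = n + 1 := by omega
    set r : Fin (n + 1) → ℝ := fun i => E.orderEmbOfFin hcard i with hrdef
    have hr : StrictMono r := (E.orderEmbOfFin hcard).strictMono
    have hrange : ∀ t ∈ E, ∃ i, r i = t := by
      intro t ht
      have h := Finset.range_orderEmbOfFin E hcard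
      have : t ∈ Set.range (E.orderEmbOfFin hcard) := by rw [h]; exact_mod_cast ht
      exact Set.mem_range.mp this
    have ii := hindep n r hr
    have hΔmeas : ∀ i : Fin n,
        Measurable (fun ω => B ω (r i.succ) - B ω (r i.castSucc)) :=
      fun i => (hmeas _).sub (hmeas _)
    set 𝒮 : Finset (Fin n) :=
      Finset.univ.filter (fun j : Fin n => w₁ ≤ r j.castSucc ∧ r j.succ ≤ w₂) with hSdef
    set 𝒯 : Finset (Fin n) :=
      Finset.univ.filter (fun j : Fin n => ¬(w₁ ≤ r j.castSucc ∧ r j.succ ≤ w₂)) with hTdef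
    have hdisj : Disjoint 𝒮 𝒯 := Finset.disjoint_filter_filter_not _ _ _
    have hgroup := iIndepFun.indepFun_finset 𝒮 𝒯 hdisj ii hΔmeas
    -- block sums
    have hblock : ∀ (ω : Ω) (c d : ℝ), c ∈ E → d ∈ E → c ≤ d →
        ∑ j ∈ Finset.univ.filter (fun j : Fin n => c ≤ r j.castSucc ∧ r j.succ ≤ d),
          (B ω (r j.succ) - B ω (r j.castSucc)) = B ω d - B ω c := by
      intro ω c d hc hd hcd
      obtain ⟨kc, rfl⟩ := hrange c hc
      obtain ⟨kd, rfl⟩ := hrange d hd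
      exact telescope_sum r hr (B ω) kc kd (hr.le_iff_le.mp hcd)
    -- φ and factorization of Z
    set φ : ((i : 𝒮) → ℝ) → ℝ × ℝ := fun p =>
      (∑ i ∈ 𝒮.attach, if r (i : Fin n).succ ≤ x₀ then p i else 0,
       ∑ i ∈ 𝒮.attach, if x₀ ≤ r (i : Fin n).castSucc then p i else 0) with hφdef
    have hφm : Measurable φ := by
      refine Measurable.prodMk ?_ ?_
      · apply Finset.measurable_sum
        intro i _
        by_cases hcond : r (i : Fin n).succ ≤ x₀
        · simp only [if_pos hcond]; exact measurable_pi_apply i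
        · simp only [if_neg hcond]; exact measurable_const
      · apply Finset.measurable_sum
        intro i _
        by_cases hcond : x₀ ≤ r (i : Fin n).castSucc
        · simp only [if_pos hcond]; exact measurable_pi_apply i
        · simp only [if_neg hcond]; exact measurable_const
    have hsum_attach : ∀ (ω : Ω) (q : Fin n → Prop) [DecidablePred q],
        ∑ i ∈ 𝒮.attach, (if q (i : Fin n) then B ω (r (i : Fin n).succ) - B ω (r (i : Fin n).castSucc) else 0)
          = ∑ j ∈ 𝒮.filter q, (B ω (r j.succ) - B ω (r j.castSucc)) := by
      intro ω q _
      rw [Finset.sum_filter]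
      exact Finset.sum_attach 𝒮 (fun j => if q j then B ω (r j.succ) - B ω (r j.castSucc) else 0)
    have hZfac : Z = φ ∘ (fun a (i : 𝒮) => (fun i : Fin n => fun ω => B ω (r i.succ) - B ω (r i.castSucc)) i a) := by
      funext ω
      have hX : B ω x₀ - B ω w₁
          = ∑ i ∈ 𝒮.attach, if r (i : Fin n).succ ≤ x₀
              then B ω (r (i : Fin n).succ) - B ω (r (i : Fin n).castSucc) else 0 := by
        rw [hsum_attach ω (fun j => r j.succ ≤ x₀)]
        rw [hSdef, Finset.filter_filter]
        rw [show (Finset.univ.filter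
            (fun j : Fin n => (w₁ ≤ r j.castSucc ∧ r j.succ ≤ w₂) ∧ r j.succ ≤ x₀))
          = (Finset.univ.filter (fun j : Fin n => w₁ ≤ r j.castSucc ∧ r j.succ ≤ x₀)) from
          Finset.filter_congr (fun j _ => by
            constructor
            · rintro ⟨⟨ha, _⟩, hb⟩; exact ⟨ha, hb⟩
            · rintro ⟨ha, hb⟩; exact ⟨⟨ha, hb.trans h2.le⟩, hb⟩)]
        rw [hblock ω w₁ x₀ hE1 hE2 h1.le]
      have hY : B ω w₂ - B ω x₀
          = ∑ i ∈ 𝒮.attach, if x₀ ≤ r (i : Fin n).castSucc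
              then B ω (r (i : Fin n).succ) - B ω (r (i : Fin n).castSucc) else 0 := by
        rw [hsum_attach ω (fun j => x₀ ≤ r j.castSucc)]
        rw [hSdef, Finset.filter_filter]
        rw [show (Finset.univ.filter
            (fun j : Fin n => (w₁ ≤ r j.castSucc ∧ r j.succ ≤ w₂) ∧ x₀ ≤ r j.castSucc))
          = (Finset.univ.filter (fun j : Fin n => x₀ ≤ r j.castSucc ∧ r j.succ ≤ w₂)) from
          Finset.filter_congr (fun j _ => by
            constructor
            · rintro ⟨⟨_, ha⟩, hb⟩; exact ⟨hb, ha⟩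
            · rintro ⟨ha, hb⟩; exact ⟨⟨h1.le.trans ha, hb⟩, ha⟩)]
        rw [hblock ω x₀ w₂ hE2 hE3 h2.le]
      exact Prod.ext hX hY
    -- θ and factorization of restrict ∘ W
    set θ : ((i : 𝒯) → ℝ) → ((i : s) → ℝ) := fun p i =>
      Sum.elim
        (fun k => -∑ j ∈ 𝒯.attach,
          if u k ≤ r (j : Fin n).castSucc ∧ r (j : Fin n).succ ≤ w₁ then p j else 0)
        (fun k => ∑ j ∈ 𝒯.attach,
          if w₂ ≤ r (j : Fin n).castSucc ∧ r (j : Fin n).succ ≤ v k then p j else 0)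
        (i : ℕ ⊕ ℕ) with hθdef
    have hθm : Measurable θ := by
      apply measurable_pi_lambda
      rintro ⟨i', hi'⟩
      cases i' with
      | inl k =>
        apply Measurable.neg
        apply Finset.measurable_sum
        intro j _
        by_cases hcond : u k ≤ r (j : Fin n).castSucc ∧ r (j : Fin n).succ ≤ w₁
        · simp only [if_pos hcond]; exact measurable_pi_apply j
        · simp only [if_neg hcond]; exact measurable_const
      | inr k =>
        apply Finset.measurable_sum
        intro j _
        by_cases hcond : w₂ ≤ r (j : Fin n).castSucc ∧ r (j : Fin n).succ ≤ v k
        · simp only [if_pos hcond]; exact measurable_pi_apply j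
        · simp only [if_neg hcond]; exact measurable_const
    have hTsum : ∀ (ω : Ω) (q : Fin n → Prop) [DecidablePred q],
        ∑ j ∈ 𝒯.attach, (if q (j : Fin n) then B ω (r (j : Fin n).succ) - B ω (r (j : Fin n).castSucc) else 0)
          = ∑ j ∈ 𝒯.filter q, (B ω (r j.succ) - B ω (r j.castSucc)) := by
      intro ω q _
      rw [Finset.sum_filter]
      exact Finset.sum_attach 𝒯 (fun j => if q j then B ω (r j.succ) - B ω (r j.castSucc) else 0)
    have hWfac : (fun ω => s.restrict (W ω))
        = θ ∘ (fun a (i : 𝒯) => (fun i : Fin n => fun ω => B ω (r i.succ) - B ω (r i.castSucc)) i a) := by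
      funext ω
      funext i
      obtain ⟨i', hi'⟩ := i
      cases i' with
      | inl k =>
        show B ω (u k) - B ω w₁ = _
        have : θ (fun (i : 𝒯) => B ω (r (i : Fin n).succ) - B ω (r (i : Fin n).castSucc)) ⟨Sum.inl k, hi'⟩
            = -∑ j ∈ 𝒯.attach,
              if u k ≤ r (j : Fin n).castSucc ∧ r (j : Fin n).succ ≤ w₁
              then B ω (r (j : Fin n).succ) - B ω (r (j : Fin n).castSucc) else 0 := rfl
        rw [Function.comp_apply, this]
        rw [hTsum ω (fun j => u k ≤ r j.castSucc ∧ r j.succ ≤ w₁)]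
        rw [hTdef, Finset.filter_filter]
        rw [show (Finset.univ.filter (fun j : Fin n =>
            ¬(w₁ ≤ r j.castSucc ∧ r j.succ ≤ w₂) ∧ (u k ≤ r j.castSucc ∧ r j.succ ≤ w₁)))
          = (Finset.univ.filter (fun j : Fin n => u k ≤ r j.castSucc ∧ r j.succ ≤ w₁)) from
          Finset.filter_congr (fun j _ => by
            constructor
            · rintro ⟨_, hb⟩; exact hb
            · intro hb
              refine ⟨fun hcon => ?_, hb⟩
              have := lt_of_lt_of_le ((hr.lt_iff_lt.mpr (Fin.castSucc_lt_succ : j.castSucc < j.succ))) hb.2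
              exact absurd hcon.1 (not_le.mpr this))]
        rw [hblock ω (u k) w₁ (hEpt (Sum.inl k) hi') hE1 (hu k)]
        ring
      | inr k =>
        show B ω (v k) - B ω w₂ = _
        have : θ (fun (i : 𝒯) => B ω (r (i : Fin n).succ) - B ω (r (i : Fin n).castSucc)) ⟨Sum.inr k, hi'⟩
            = ∑ j ∈ 𝒯.attach,
              if w₂ ≤ r (j : Fin n).castSucc ∧ r (j : Fin n).succ ≤ v k
              then B ω (r (j : Fin n).succ) - B ω (r (j : Fin n).castSucc) else 0 := rfl
        rw [Function.comp_apply, this]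
        rw [hTsum ω (fun j => w₂ ≤ r j.castSucc ∧ r j.succ ≤ v k)]
        rw [hTdef, Finset.filter_filter]
        rw [show (Finset.univ.filter (fun j : Fin n =>
            ¬(w₁ ≤ r j.castSucc ∧ r j.succ ≤ w₂) ∧ (w₂ ≤ r j.castSucc ∧ r j.succ ≤ v k)))
          = (Finset.univ.filter (fun j : Fin n => w₂ ≤ r j.castSucc ∧ r j.succ ≤ v k)) from
          Finset.filter_congr (fun j _ => by
            constructor
            · rintro ⟨_, hb⟩; exact hb
            · intro hb
              refine ⟨fun hcon => ?_, hb⟩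
              have := lt_of_le_of_lt hb.1 (hr.lt_iff_lt.mpr (Fin.castSucc_lt_succ : j.castSucc < j.succ))
              exact absurd hcon.2 (not_le.mpr this))]
        rw [hblock ω w₂ (v k) hE3 (hEpt (Sum.inr k) hi') (hv k)]
    -- conclude
    have e₁ : Z ⁻¹' (SA ×ˢ TA)
        = (fun a (i : 𝒮) => (fun i : Fin n => fun ω => B ω (r i.succ) - B ω (r i.castSucc)) i a) ⁻¹'
            (φ ⁻¹' (SA ×ˢ TA)) := by
      rw [hZfac, Set.preimage_comp]
    have e₂ : W ⁻¹' (cylinder s S')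
        = (fun a (i : 𝒯) => (fun i : Fin n => fun ω => B ω (r i.succ) - B ω (r i.castSucc)) i a) ⁻¹'
            (θ ⁻¹' S') := by
      have h0 : W ⁻¹' (cylinder s S') = (fun ω => s.restrict (W ω)) ⁻¹' S' := rfl
      rw [h0, hWfac, Set.preimage_comp]
    have hSA' : MeasurableSet SA := hSA
    have hTA' : MeasurableSet TA := hTA
    apply Filter.Eventually.of_forall
    intro _
    simp only [Kernel.const_apply]
    rw [e₁, e₂]
    exact hgroup.measure_inter_preimage_eq_mul _ _ (hφm (hSA'.prod hTA')) (hθm hS')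


lemma dense_seq (lo hi : ℝ) (hlohi : lo ≤ hi) :
    ∃ f : ℕ → ℝ, (∀ k, f k ∈ Icc lo hi) ∧ Icc lo hi ⊆ closure (Set.range f) := by
  classical
  set c : Set ℝ := {lo, hi} ∪ (Set.range ((↑) : ℚ → ℝ) ∩ Ioo lo hi) with hc
  have hcount : c.Countable :=
    (Set.countable_insert.2 (Set.countable_singleton hi)).union
      ((Set.countable_range _).mono inter_subset_left)
  have hne : c.Nonempty := ⟨lo, Or.inl (Set.mem_insert _ _)⟩
  have hsubset : c ⊆ Icc lo hi := by
    rintro x (hx | hx)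
    · rcases hx with rfl | hx
      · exact ⟨le_rfl, hlohi⟩
      · rcases hx with rfl
        exact ⟨hlohi, le_rfl⟩
    · exact Ioo_subset_Icc_self hx.2
  have hcl : Icc lo hi ⊆ closure c := by
    intro x hx
    rcases eq_or_ne x lo with rfl | hxlo
    · exact subset_closure (Or.inl (Set.mem_insert _ _))
    rcases eq_or_ne x hi with rfl | hxhi
    · exact subset_closure (Or.inl (Set.mem_insert_of_mem _ rfl))
    have hx' : x ∈ Ioo lo hi :=
      ⟨lt_of_le_of_ne hx.1 (Ne.symm hxlo), lt_of_le_of_ne hx.2 hxhi⟩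
    have h1 : Ioo lo hi ⊆ closure (Ioo lo hi ∩ Set.range ((↑) : ℚ → ℝ)) :=
      Rat.denseRange_cast.open_subset_closure_inter isOpen_Ioo
    have h2 : Ioo lo hi ∩ Set.range ((↑) : ℚ → ℝ) ⊆ c := by
      rintro y ⟨hy1, hy2⟩
      exact Or.inr ⟨hy2, hy1⟩
    exact closure_mono h2 (h1 hx')
  obtain ⟨f, hf⟩ := hcount.exists_eq_range hne
  refine ⟨f, fun k => hsubset ?_, by rw [← hf]; exact hcl⟩
  rw [hf]
  exact mem_range_self k


lemma strictMono_triple {w₁ x₀ w₂ : ℝ} (h1 : w₁ < x₀) (h2 : x₀ < w₂) :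
    StrictMono ![w₁, x₀, w₂] := by
  have key : ∀ i : Fin 2, ![w₁, x₀, w₂] i.castSucc < ![w₁, x₀, w₂] i.succ := by
    intro i
    fin_cases i
    · simpa using h1
    · simpa using h2
  exact Fin.strictMono_iff_lt_succ.mpr key

lemma indepFun_window {Ω : Type*} [MeasurableSpace Ω] {μ : Measure Ω} {B : Ω → ℝ → ℝ}
    (hBi : ∀ n : ℕ, ∀ r : Fin (n + 1) → ℝ, StrictMono r →
      iIndepFun (m := fun _ : Fin n => Real.measurableSpace)
        (fun i : Fin n => fun ω => B ω (r i.succ) - B ω (r i.castSucc)) μ)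
    (w₁ x₀ w₂ : ℝ) (h1 : w₁ < x₀) (h2 : x₀ < w₂) :
    IndepFun (fun ω => B ω x₀ - B ω w₁) (fun ω => B ω w₂ - B ω x₀) μ := by
  have h := (hBi 2 ![w₁, x₀, w₂] (strictMono_triple h1 h2)).indepFun
    (i := 0) (j := 1) (by decide)
  have e0 : (![w₁, x₀, w₂] (0 : Fin 2).succ) = x₀ := rfl
  have e0' : (![w₁, x₀, w₂] (0 : Fin 2).castSucc) = w₁ := rfl
  have e1 : (![w₁, x₀, w₂] (1 : Fin 2).succ) = w₂ := rfl
  have e1' : (![w₁, x₀, w₂] (1 : Fin 2).castSucc) = x₀ := rfl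
  simpa [e0, e0', e1, e1'] using h


theorem bm_aux_main {Ω : Type*} [MeasurableSpace Ω]
    (μ : Measure Ω) [IsProbabilityMeasure μ]
    (B : Ω → ℝ → ℝ)
    (hB0 : ∀ ω, B ω 0 = 0) (hBc : ∀ ω, Continuous (B ω))
    (hBm : ∀ x : ℝ, Measurable fun ω => B ω x)
    (hBi : ∀ n : ℕ, ∀ r : Fin (n + 1) → ℝ, StrictMono r →
      iIndepFun (m := fun _ : Fin n => Real.measurableSpace)
        (fun i : Fin n => fun ω => B ω (r i.succ) - B ω (r i.castSucc)) μ)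
    (hBg : ∀ x y : ℝ, x < y →
      Measure.map (fun ω => B ω y - B ω x) μ = gaussianReal 0 (Real.toNNReal (y - x)))
    (g : ℝ → ℝ) (hg : Continuous g)
    (a b x₀ δ : ℝ) (hax : a < x₀) (hxb : x₀ < b) (hδ : 0 < δ)
    (hsub : Ioo (x₀ - δ) (x₀ + δ) ⊆ Ioo a b) :
    0 < μ {ω | sSup ((fun x => B ω x + g x) '' Ioo (x₀ - δ) (x₀ + δ)) >
        sSup ((fun x => B ω x + g x) '' (Icc a b \ Ioo (x₀ - δ) (x₀ + δ)))} := by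
  classical
  set w₁ : ℝ := x₀ - δ with hw₁def
  set w₂ : ℝ := x₀ + δ with hw₂def
  have hw1x : w₁ < x₀ := by rw [hw₁def]; linarith
  have hxw2 : x₀ < w₂ := by rw [hw₂def]; linarith
  have hw12 : w₁ < w₂ := hw1x.trans hxw2
  obtain ⟨haw1, hw2b⟩ := (Set.Ioo_subset_Ioo_iff hw12).mp hsub
  have hab : a < b := hax.trans hxb
  obtain ⟨u, hu_mem, hu_cl⟩ := dense_seq a w₁ haw1
  obtain ⟨v, hv_mem, hv_cl⟩ := dense_seq w₂ b hw2b
  -- sup over outside parts, relative to anchors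
  set sL : Ω → ℝ := fun ω => sSup (Set.range (fun k => B ω (u k) - B ω w₁ + g (u k))) with hsLdef
  set sR : Ω → ℝ := fun ω => sSup (Set.range (fun k => B ω (v k) - B ω w₂ + g (v k))) with hsRdef
  have hContL : ∀ ω : Ω, Continuous fun t => B ω t - B ω w₁ + g t :=
    fun ω => ((hBc ω).sub continuous_const).add hg
  have hContR : ∀ ω : Ω, Continuous fun t => B ω t - B ω w₂ + g t :=
    fun ω => ((hBc ω).sub continuous_const).add hg
  have hbddL : ∀ ω : Ω, BddAbove (Set.range (fun k => B ω (u k) - B ω w₁ + g (u k))) := by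
    intro ω
    have himg : BddAbove ((fun t => B ω t - B ω w₁ + g t) '' Icc a w₁) :=
      isCompact_Icc.bddAbove_image (hContL ω).continuousOn
    refine BddAbove.mono ?_ himg
    rintro _ ⟨k, rfl⟩
    exact mem_image_of_mem _ (hu_mem k)
  have hbddR : ∀ ω : Ω, BddAbove (Set.range (fun k => B ω (v k) - B ω w₂ + g (v k))) := by
    intro ω
    have himg : BddAbove ((fun t => B ω t - B ω w₂ + g t) '' Icc w₂ b) :=
      isCompact_Icc.bddAbove_image (hContR ω).continuousOn
    refine BddAbove.mono ?_ himg
    rintro _ ⟨k, rfl⟩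
    exact mem_image_of_mem _ (hv_mem k)
  have hL_le : ∀ ω : Ω, ∀ t ∈ Icc a w₁, B ω t - B ω w₁ + g t ≤ sL ω := by
    intro ω t ht
    have hsubset : Set.range u ⊆ {t : ℝ | B ω t - B ω w₁ + g t ≤ sL ω} := by
      rintro _ ⟨k, rfl⟩
      exact le_csSup (hbddL ω) (mem_range_self k)
    exact closure_minimal hsubset (isClosed_le (hContL ω) continuous_const) (hu_cl ht)
  have hR_le : ∀ ω : Ω, ∀ t ∈ Icc w₂ b, B ω t - B ω w₂ + g t ≤ sR ω := by
    intro ω t ht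
    have hsubset : Set.range v ⊆ {t : ℝ | B ω t - B ω w₂ + g t ≤ sR ω} := by
      rintro _ ⟨k, rfl⟩
      exact le_csSup (hbddR ω) (mem_range_self k)
    exact closure_minimal hsubset (isClosed_le (hContR ω) continuous_const) (hv_cl ht)
  have hsLlt : ∀ (C : ℝ) (ω : Ω), sL ω < C ↔
      ∃ q : ℚ, (q : ℝ) < C ∧ ∀ k, B ω (u k) - B ω w₁ + g (u k) ≤ (q : ℝ) := by
    intro C ω
    constructor
    · intro h
      obtain ⟨q, hq1, hq2⟩ := exists_rat_btwn h
      exact ⟨q, hq2, fun k => (le_csSup (hbddL ω) (mem_range_self k)).trans hq1.le⟩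
    · rintro ⟨q, hq, hk⟩
      refine lt_of_le_of_lt (csSup_le (range_nonempty _) ?_) hq
      rintro _ ⟨k, rfl⟩
      exact hk k
  have hsRlt : ∀ (C : ℝ) (ω : Ω), sR ω < C ↔
      ∃ q : ℚ, (q : ℝ) < C ∧ ∀ k, B ω (v k) - B ω w₂ + g (v k) ≤ (q : ℝ) := by
    intro C ω
    constructor
    · intro h
      obtain ⟨q, hq1, hq2⟩ := exists_rat_btwn h
      exact ⟨q, hq2, fun k => (le_csSup (hbddR ω) (mem_range_self k)).trans hq1.le⟩
    · rintro ⟨q, hq, hk⟩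
      refine lt_of_le_of_lt (csSup_le (range_nonempty _) ?_) hq
      rintro _ ⟨k, rfl⟩
      exact hk k
  -- choose the cutoff C = m
  have hcover : (⋃ m : ℕ, ({ω | sL ω < (m : ℝ)} ∩ {ω | sR ω < (m : ℝ)})) = Set.univ := by
    ext ω
    simp only [Set.mem_iUnion, Set.mem_univ, iff_true, Set.mem_inter_iff, Set.mem_setOf_eq]
    obtain ⟨m, hm⟩ := exists_nat_gt (max (sL ω) (sR ω))
    exact ⟨m, (le_max_left _ _).trans_lt hm, (le_max_right _ _).trans_lt hm⟩
  have hpos_exists : ∃ m : ℕ, 0 < μ ({ω | sL ω < (m : ℝ)} ∩ {ω | sR ω < (m : ℝ)}) := by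
    by_contra hcon
    push_neg at hcon
    have hz : ∀ m : ℕ, μ ({ω | sL ω < (m : ℝ)} ∩ {ω | sR ω < (m : ℝ)}) = 0 :=
      fun m => le_antisymm (hcon m) zero_le
    have hle := measure_iUnion_le
      (μ := μ) (fun m : ℕ => ({ω | sL ω < (m : ℝ)} ∩ {ω | sR ω < (m : ℝ)}))
    rw [hcover, measure_univ] at hle
    simp only [hz, tsum_zero] at hle
    simp at hle
  obtain ⟨m, hm⟩ := hpos_exists
  set C : ℝ := (m : ℝ) with hCdef
  -- the independence
  have key := key_indep hBm hBi w₁ x₀ w₂ hw1x hxw2 u v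
    (fun k => (hu_mem k).2) (fun k => (hv_mem k).1)
  -- the good W-measurable set
  obtain ⟨GsetL, hGsLmeas, hWGsL⟩ : ∃ GsetL : Set (ℕ ⊕ ℕ → ℝ), MeasurableSet GsetL ∧
      (fun ω => Sum.elim (fun k => B ω (u k) - B ω w₁) (fun k => B ω (v k) - B ω w₂))
        ⁻¹' GsetL = {ω | sL ω < C} := by
    refine ⟨⋃ (q : ℚ) (_ : (q : ℝ) < C), ⋂ k : ℕ, {x | x (Sum.inl k) + g (u k) ≤ (q : ℝ)},
      ?_, ?_⟩
    · refine MeasurableSet.iUnion fun q => MeasurableSet.iUnion fun _ =>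
        MeasurableSet.iInter fun k => ?_
      exact measurableSet_le ((measurable_pi_apply _).add_const _) measurable_const
    · ext ω
      simp only [Set.mem_preimage, Set.mem_iUnion, Set.mem_iInter, Set.mem_setOf_eq,
        Sum.elim_inl, exists_prop]
      rw [hsLlt C ω]
  obtain ⟨GsetR, hGsRmeas, hWGsR⟩ : ∃ GsetR : Set (ℕ ⊕ ℕ → ℝ), MeasurableSet GsetR ∧
      (fun ω => Sum.elim (fun k => B ω (u k) - B ω w₁) (fun k => B ω (v k) - B ω w₂))
        ⁻¹' GsetR = {ω | sR ω < C} := by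
    refine ⟨⋃ (q : ℚ) (_ : (q : ℝ) < C), ⋂ k : ℕ, {x | x (Sum.inr k) + g (v k) ≤ (q : ℝ)},
      ?_, ?_⟩
    · refine MeasurableSet.iUnion fun q => MeasurableSet.iUnion fun _ =>
        MeasurableSet.iInter fun k => ?_
      exact measurableSet_le ((measurable_pi_apply _).add_const _) measurable_const
    · ext ω
      simp only [Set.mem_preimage, Set.mem_iUnion, Set.mem_iInter, Set.mem_setOf_eq,
        Sum.elim_inr, exists_prop]
      rw [hsRlt C ω]
  set c₁ : ℝ := C - g x₀ with hc₁def
  set c₂ : ℝ := g x₀ - C with hc₂def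
  have hE12 : (fun ω => (B ω x₀ - B ω w₁, B ω w₂ - B ω x₀)) ⁻¹' (Ioi c₁ ×ˢ Iio c₂)
      = (fun ω => B ω x₀ - B ω w₁) ⁻¹' Ioi c₁ ∩ (fun ω => B ω w₂ - B ω x₀) ⁻¹' Iio c₂ :=
    Set.mk_preimage_prod _ _
  have hmain : μ (((fun ω => B ω x₀ - B ω w₁) ⁻¹' Ioi c₁ ∩ (fun ω => B ω w₂ - B ω x₀) ⁻¹' Iio c₂)
        ∩ ({ω | sL ω < C} ∩ {ω | sR ω < C}))
      = μ ((fun ω => B ω x₀ - B ω w₁) ⁻¹' Ioi c₁ ∩ (fun ω => B ω w₂ - B ω x₀) ⁻¹' Iio c₂)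
        * μ ({ω | sL ω < C} ∩ {ω | sR ω < C}) := by
    have h := key.measure_inter_preimage_eq_mul (Ioi c₁ ×ˢ Iio c₂) (GsetL ∩ GsetR)
      (measurableSet_Ioi.prod measurableSet_Iio) (hGsLmeas.inter hGsRmeas)
    rw [Set.preimage_inter, hWGsL, hWGsR, hE12] at h
    exact h
  -- independence of the two window increments
  have hXY : IndepFun (fun ω => B ω x₀ - B ω w₁) (fun ω => B ω w₂ - B ω x₀) μ :=
    indepFun_window hBi w₁ x₀ w₂ hw1x hxw2
  have hsplit : μ ((fun ω => B ω x₀ - B ω w₁) ⁻¹' Ioi c₁ ∩ (fun ω => B ω w₂ - B ω x₀) ⁻¹' Iio c₂)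
      = μ ((fun ω => B ω x₀ - B ω w₁) ⁻¹' Ioi c₁) * μ ((fun ω => B ω w₂ - B ω x₀) ⁻¹' Iio c₂) :=
    hXY.measure_inter_preimage_eq_mul _ _ measurableSet_Ioi measurableSet_Iio
  have hXpos : 0 < μ ((fun ω => B ω x₀ - B ω w₁) ⁻¹' Ioi c₁) := by
    rw [← Measure.map_apply (show Measurable (fun ω => B ω x₀ - B ω w₁) from (hBm x₀).sub (hBm w₁)) measurableSet_Ioi, hBg w₁ x₀ hw1x]
    refine gaussianReal_pos ?_ 0 ?_
    · exact (Real.toNNReal_pos.mpr (by rw [hw₁def]; linarith)).ne'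
    · rw [Real.volume_Ioi]; exact ENNReal.top_ne_zero
  have hYpos : 0 < μ ((fun ω => B ω w₂ - B ω x₀) ⁻¹' Iio c₂) := by
    rw [← Measure.map_apply (show Measurable (fun ω => B ω w₂ - B ω x₀) from (hBm w₂).sub (hBm x₀)) measurableSet_Iio, hBg x₀ w₂ hxw2]
    refine gaussianReal_pos ?_ 0 ?_
    · exact (Real.toNNReal_pos.mpr (by rw [hw₂def]; linarith)).ne'
    · rw [Real.volume_Iio]; exact ENNReal.top_ne_zero
  -- inclusion into the target event
  have hincl : (((fun ω => B ω x₀ - B ω w₁) ⁻¹' Ioi c₁ ∩ (fun ω => B ω w₂ - B ω x₀) ⁻¹' Iio c₂)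
        ∩ ({ω | sL ω < C} ∩ {ω | sR ω < C}))
      ⊆ {ω | sSup ((fun x => B ω x + g x) '' Ioo w₁ w₂) >
          sSup ((fun x => B ω x + g x) '' (Icc a b \ Ioo w₁ w₂))} := by
    rintro ω ⟨⟨hX1, hY1⟩, hsl, hsr⟩
    have hX1' : c₁ < B ω x₀ - B ω w₁ := hX1
    have hY1' : B ω w₂ - B ω x₀ < c₂ := hY1
    have hsl' : sL ω < C := hsl
    have hsr' : sR ω < C := hsr
    have hx0mem : x₀ ∈ Ioo w₁ w₂ := ⟨hw1x, hxw2⟩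
    have hbdd_window : BddAbove ((fun x => B ω x + g x) '' Ioo w₁ w₂) := by
      refine BddAbove.mono (Set.image_mono Ioo_subset_Icc_self)
        (isCompact_Icc.bddAbove_image ((hBc ω).add hg).continuousOn)
    have hMge : B ω x₀ + g x₀ ≤ sSup ((fun x => B ω x + g x) '' Ioo w₁ w₂) :=
      le_csSup hbdd_window (mem_image_of_mem _ hx0mem)
    have hKne : ((fun x => B ω x + g x) '' (Icc a b \ Ioo w₁ w₂)).Nonempty := by
      refine ⟨B ω a + g a, mem_image_of_mem _ ⟨⟨le_rfl, hab.le⟩, fun hcon => ?_⟩⟩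
      exact absurd hcon.1 (not_lt.mpr haw1)
    have hKbound : ∀ y ∈ (fun x => B ω x + g x) '' (Icc a b \ Ioo w₁ w₂),
        y ≤ max (B ω w₁ + sL ω) (B ω w₂ + sR ω) := by
      rintro _ ⟨t, ⟨htab, htn⟩, rfl⟩
      dsimp only
      rcases le_or_gt t w₁ with hle | hgt
      · exact le_trans (by linarith [hL_le ω t ⟨htab.1, hle⟩]) (le_max_left _ _)
      · have hw2t : w₂ ≤ t := by
          by_contra hcon
          push_neg at hcon
          exact htn ⟨hgt, hcon⟩
        exact le_trans (by linarith [hR_le ω t ⟨hw2t, htab.2⟩]) (le_max_right _ _)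
    have hKlt : max (B ω w₁ + sL ω) (B ω w₂ + sR ω) < B ω x₀ + g x₀ := by
      apply max_lt
      · rw [hc₁def] at hX1'; linarith
      · rw [hc₂def] at hY1'; linarith
    show sSup ((fun x => B ω x + g x) '' (Icc a b \ Ioo w₁ w₂))
        < sSup ((fun x => B ω x + g x) '' Ioo w₁ w₂)
    exact lt_of_lt_of_le (lt_of_le_of_lt (csSup_le hKne hKbound) hKlt) hMge
  refine lt_of_lt_of_le ?_ (measure_mono hincl)
  rw [hmain, hsplit]
  exact ENNReal.mul_pos (ENNReal.mul_pos hXpos.ne' hYpos.ne').ne' hm.ne'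

end BMaux

/-- For a two-sided Brownian motion `B`, a continuous function `g`, and any subinterval
`(x₀−δ, x₀+δ) ⊆ (a,b)`, with positive probability the supremum of `B + g` over
`(x₀−δ, x₀+δ)` exceeds its supremum over the rest of `[a,b]`. -/
theorem bm_plus_drift_max_in_window {Ω : Type*} [MeasurableSpace Ω]
    (μ : Measure Ω) [IsProbabilityMeasure μ]
    (B : Ω → ℝ → ℝ) (hB : IsTwoSidedBM μ B)
    (g : ℝ → ℝ) (hg : Continuous g)
    (a b x₀ δ : ℝ) (hax : a < x₀) (hxb : x₀ < b) (hδ : 0 < δ)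
    (hsub : Ioo (x₀ - δ) (x₀ + δ) ⊆ Ioo a b) :
    0 < μ {ω | sSup ((fun x => B ω x + g x) '' Ioo (x₀ - δ) (x₀ + δ)) >
        sSup ((fun x => B ω x + g x) '' (Icc a b \ Ioo (x₀ - δ) (x₀ + δ)))} := by
  obtain ⟨hB0, hBc, hBm, hBi, hBg⟩ := hB
  exact BMaux.bm_aux_main μ B hB0 hBc hBm hBi hBg g hg a b x₀ δ hax hxb hδ hsub
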